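/- arXiv:2105.02675 — 2 statements merged into one kernel-verified Lean document; each statement's English description precedes it below -/
import Mathlib

section
/- In the MTD model, if all columns of the matrix Z^j are equal, then the conditional probability p(x_{ti} | x_{(t-1)1}, ..., x_{(t-1)p}) = z^0_{x_{ti}} + Σ_{l} Z^l_{x_{ti}, x_{(t-1)l}} does not depend on the value of x_{(t-1)j}; conversely, if the conditional probability is invariant to x_{(t-1)j} for all configurations of the other variables, then all columns of Z^j are equal. -/
open Function

section AdditivelySeparable

variable {ι M : Type*} [Fintype ι] [DecidableEq ι] {α : ι → Type*}

theorem sum_apply_update_add_apply [AddCommMonoid M] (f : ∀ l, α l → M) (b : ∀ l, α l) (j : ι)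
    (v : α j) :
    ∑ l, f l (update b j v l) + f j (b j) = ∑ l, f l (b l) + f j v := by
  simp only [apply_update f, Finset.sum_update_of_mem (Finset.mem_univ j)]
  rw [← Finset.add_sum_erase _ _ (Finset.mem_univ j), Finset.sdiff_singleton_eq_erase]
  abel

theorem sum_apply_update_eq_iff_forall_eq [AddCancelCommMonoid M] [∀ l, Nonempty (α l)]
    (f : ∀ l, α l → M) (j : ι) :
    (∀ (b : ∀ l, α l) (v : α j), ∑ l, f l (update b j v l) = ∑ l, f l (b l)) ↔
      ∀ c c' : α j, f j c = f j c' := by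
  constructor
  · intro h c c'
    have key := sum_apply_update_add_apply f (update (fun _ => Classical.arbitrary _) j c') j c
    rw [h, update_self] at key
    exact (add_left_cancel key).symm
  · intro h b v
    have key := sum_apply_update_add_apply f b j v
    rwa [h v (b j), add_left_inj] at key

end AdditivelySeparable

/-- In the MTD model, with conditional probability
`p(a | b) = z⁰ a + ∑ l, Z l a (b l)`, the conditional probability is invariant to the
value of the `j`-th lagged variable (for all configurations of the others) if and only if
all columns of `Z j` are equal, i.e. `x_j` is Granger non-causal for `x_i` iff the
columns of `Z j` coincide.  Each series has a positive number of categories. -/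
theorem mtd_granger_noncausality_iff_columns_equal (p m : ℕ) (mj : Fin p → ℕ)
    (hmj : ∀ l, 0 < mj l)
    (z0 : Fin m → ℝ) (Z : ∀ j : Fin p, Matrix (Fin m) (Fin (mj j)) ℝ) (j : Fin p) :
    (∀ (a : Fin m) (b : ∀ l : Fin p, Fin (mj l)) (v : Fin (mj j)),
        z0 a + (∑ l, Z l a ((Function.update b j v) l)) = z0 a + ∑ l, Z l a (b l))
      ↔ (∀ (a : Fin m) (c c' : Fin (mj j)), Z j a c = Z j a c') := by
  have : ∀ l, Nonempty (Fin (mj l)) := fun l => ⟨⟨0, hmj l⟩⟩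
  simp only [add_right_inj]
  exact forall_congr' fun a => sum_apply_update_eq_iff_forall_eq (fun l => Z l a) j
end

section
/- In a component-wise LSTM model, if the j-th column of the stacked input weight matrix W^1 = ((W^f)^T, (W^in)^T, (W^o)^T, (W^c)^T)^T is zero, then for any input sequences x and x' differing only in the j-th coordinate at every time step, the induced hidden state sequences (c_t, h_t) are identical (given the same initialization), and hence the predicted output x_{ti} is identical; so series x_j does not Granger cause series x_i. -/
/-- One step of the component-wise LSTM recursion:
`f_t = σ(Wf x + Uf h)`, `i_t = σ(Win x + Uin h)`, `o_t = σ(Wo x + Uo h)`,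
`c_t = f_t ⊙ c + i_t ⊙ σ(Wc x + Uc h)`, `h_t = o_t ⊙ σ(c_t)`. -/
def lstmStep {p H : ℕ} (σ : ℝ → ℝ)
    (Wf Win Wo Wc : Matrix (Fin H) (Fin p) ℝ) (Uf Uin Uo Uc : Matrix (Fin H) (Fin H) ℝ)
    (x : Fin p → ℝ) (ch : (Fin H → ℝ) × (Fin H → ℝ)) : (Fin H → ℝ) × (Fin H → ℝ) :=
  let f : Fin H → ℝ := fun a => σ (Wf.mulVec x a + Uf.mulVec ch.2 a)
  let i : Fin H → ℝ := fun a => σ (Win.mulVec x a + Uin.mulVec ch.2 a)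
  let o : Fin H → ℝ := fun a => σ (Wo.mulVec x a + Uo.mulVec ch.2 a)
  let c : Fin H → ℝ := fun a => f a * ch.1 a + i a * σ (Wc.mulVec x a + Uc.mulVec ch.2 a)
  (c, fun a => o a * σ (c a))

/-- The LSTM state sequence `(c_t, h_t)` from initialization `init` driven by inputs `xs`. -/
def lstmSeq {p H : ℕ} (σ : ℝ → ℝ)
    (Wf Win Wo Wc : Matrix (Fin H) (Fin p) ℝ) (Uf Uin Uo Uc : Matrix (Fin H) (Fin H) ℝ)
    (xs : ℕ → Fin p → ℝ) (init : (Fin H → ℝ) × (Fin H → ℝ)) : ℕ → (Fin H → ℝ) × (Fin H → ℝ)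
  | 0 => init
  | t + 1 => lstmStep σ Wf Win Wo Wc Uf Uin Uo Uc (xs t)
      (lstmSeq σ Wf Win Wo Wc Uf Uin Uo Uc xs init t)

theorem Matrix.mulVec_eq_mulVec_of_col_eq_zero {m n R : Type*} [Fintype n]
    [NonUnitalNonAssocSemiring R] {W : Matrix m n R} {j : n} (hW : ∀ a, W a j = 0) {x x' : n → R}
    (hx : ∀ l, l ≠ j → x l = x' l) : W.mulVec x = W.mulVec x' := by
  funext a
  refine Finset.sum_congr rfl fun l _ => ?_
  by_cases hl : l = j
  · simp only [hl, hW a, zero_mul]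
  · rw [hx l hl]

theorem lstmStep_eq_of_col_eq_zero {p H : ℕ} (σ : ℝ → ℝ)
    (Wf Win Wo Wc : Matrix (Fin H) (Fin p) ℝ) (Uf Uin Uo Uc : Matrix (Fin H) (Fin H) ℝ)
    (j : Fin p) (hzero : ∀ a : Fin H, Wf a j = 0 ∧ Win a j = 0 ∧ Wo a j = 0 ∧ Wc a j = 0)
    {x x' : Fin p → ℝ} (hx : ∀ l, l ≠ j → x l = x' l) (ch : (Fin H → ℝ) × (Fin H → ℝ)) :
    lstmStep σ Wf Win Wo Wc Uf Uin Uo Uc x ch = lstmStep σ Wf Win Wo Wc Uf Uin Uo Uc x' ch := by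
  unfold lstmStep
  rw [Matrix.mulVec_eq_mulVec_of_col_eq_zero (fun a => (hzero a).1) hx,
    Matrix.mulVec_eq_mulVec_of_col_eq_zero (fun a => (hzero a).2.1) hx,
    Matrix.mulVec_eq_mulVec_of_col_eq_zero (fun a => (hzero a).2.2.1) hx,
    Matrix.mulVec_eq_mulVec_of_col_eq_zero (fun a => (hzero a).2.2.2) hx]

theorem lstmSeq_eq_of_col_eq_zero {p H : ℕ} (σ : ℝ → ℝ)
    (Wf Win Wo Wc : Matrix (Fin H) (Fin p) ℝ) (Uf Uin Uo Uc : Matrix (Fin H) (Fin H) ℝ)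
    (j : Fin p) (hzero : ∀ a : Fin H, Wf a j = 0 ∧ Win a j = 0 ∧ Wo a j = 0 ∧ Wc a j = 0)
    (xs xs' : ℕ → Fin p → ℝ) (hagree : ∀ (t : ℕ) (l : Fin p), l ≠ j → xs t l = xs' t l)
    (init : (Fin H → ℝ) × (Fin H → ℝ)) (t : ℕ) :
    lstmSeq σ Wf Win Wo Wc Uf Uin Uo Uc xs init t
      = lstmSeq σ Wf Win Wo Wc Uf Uin Uo Uc xs' init t := by
  induction t with
  | zero => rfl
  | succ t ih =>
    rw [lstmSeq, lstmSeq, ih,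
      lstmStep_eq_of_col_eq_zero σ Wf Win Wo Wc Uf Uin Uo Uc j hzero (hagree t)]

/-- Component-wise LSTM: if the `j`-th column of each input weight matrix
`Wf, Win, Wo, Wc` (the stacked matrix `W¹`) is zero, then for any two input sequences
differing only in coordinate `j` at every time step, the induced hidden state sequences
`(c_t, h_t)` coincide (given the same initialization), and hence the predicted output
`W² h_t` coincides; so series `x_j` does not Granger cause series `x_i`. -/
theorem clstm_zero_column_granger_noncausal (p H : ℕ) (σ : ℝ → ℝ)
    (Wf Win Wo Wc : Matrix (Fin H) (Fin p) ℝ) (Uf Uin Uo Uc : Matrix (Fin H) (Fin H) ℝ)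
    (W2 : Fin H → ℝ) (j : Fin p)
    (hzero : ∀ a : Fin H, Wf a j = 0 ∧ Win a j = 0 ∧ Wo a j = 0 ∧ Wc a j = 0)
    (xs xs' : ℕ → Fin p → ℝ)
    (hagree : ∀ (t : ℕ) (l : Fin p), l ≠ j → xs t l = xs' t l)
    (init : (Fin H → ℝ) × (Fin H → ℝ)) :
    ∀ t : ℕ,
      lstmSeq σ Wf Win Wo Wc Uf Uin Uo Uc xs init t
        = lstmSeq σ Wf Win Wo Wc Uf Uin Uo Uc xs' init t ∧
      (∑ a, W2 a * (lstmSeq σ Wf Win Wo Wc Uf Uin Uo Uc xs init t).2 a)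
        = ∑ a, W2 a * (lstmSeq σ Wf Win Wo Wc Uf Uin Uo Uc xs' init t).2 a := by
  have hseq := lstmSeq_eq_of_col_eq_zero σ Wf Win Wo Wc Uf Uin Uo Uc j hzero xs xs' hagree init
  exact fun t => ⟨hseq t, by rw [hseq t]⟩
end
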